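/- Let r ≠ 0, τ = tan φ, and suppose w : (0,∞) → ℝ is C². If u(S,t) := S·w(S e^{-rt}) + (τ/r) S ln S, then u solves the RAPM equation u_t + (σ²/2)S² u_SS(1 - μ(S u_SS)^{1/3}) - ru + rSu_S = 0 if and only if w satisfies (τ + r z(z w_zz + 2 w_z))(1 - μ r^{-1/3}(τ + r z(z w_zz + 2 w_z))^{1/3}) + 2rτ/σ² = 0 at z = S e^{-rt}. -/

import Mathlib

/-- The real cube root. -/
noncomputable def cbrt (x : ℝ) : ℝ :=
  if 0 ≤ x then x ^ ((1:ℝ)/3) else -((-x) ^ ((1:ℝ)/3))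

/-- Partial derivative in S. -/
noncomputable def pS (u : ℝ → ℝ → ℝ) (S t : ℝ) : ℝ := deriv (fun s => u s t) S
/-- Second partial derivative in S. -/
noncomputable def pSS (u : ℝ → ℝ → ℝ) (S t : ℝ) : ℝ := deriv (fun s => pS u s t) S
/-- Partial derivative in t. -/
noncomputable def pT (u : ℝ → ℝ → ℝ) (S t : ℝ) : ℝ := deriv (fun τ => u S τ) t

/-- The RAPM equation u_t + (σ²/2) S² u_SS (1 - μ (S u_SS)^{1/3}) - r u + r S u_S = 0
holds at the point (S, t). -/
def RAPM (σ μ r : ℝ) (u : ℝ → ℝ → ℝ) (S t : ℝ) : Prop :=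
  pT u S t + σ^2/2 * S^2 * pSS u S t * (1 - μ * cbrt (S * pSS u S t))
    - r * u S t + r * S * pS u S t = 0

lemma cbrt_zero : cbrt 0 = 0 := by simp [cbrt]

lemma cbrt_neg (x : ℝ) : cbrt (-x) = -cbrt x := by
  unfold cbrt
  rcases lt_trichotomy x 0 with h|h|h
  · rw [if_pos (by linarith), if_neg (by linarith), neg_neg]
  · simp [h]
  · rw [if_neg (by linarith), if_pos h.le, neg_neg]

lemma cbrt_mul_nn {x y : ℝ} (hx : 0 ≤ x) (hy : 0 ≤ y) : cbrt (x*y) = cbrt x * cbrt y := by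
  unfold cbrt
  rw [if_pos (mul_nonneg hx hy), if_pos hx, if_pos hy, Real.mul_rpow hx hy]

lemma cbrt_mul (x y : ℝ) : cbrt (x*y) = cbrt x * cbrt y := by
  rcases le_or_gt 0 x with hx|hx <;> rcases le_or_gt 0 y with hy|hy
  · exact cbrt_mul_nn hx hy
  · have h2 := cbrt_mul_nn hx (by linarith : (0:ℝ) ≤ -y)
    rw [cbrt_neg] at h2
    have h1 : x * y = -(x * -y) := by ring
    rw [h1, cbrt_neg, h2]; ring
  · have h2 := cbrt_mul_nn (by linarith : (0:ℝ) ≤ -x) hy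
    rw [cbrt_neg] at h2
    have h1 : x * y = -(-x * y) := by ring
    rw [h1, cbrt_neg, h2]; ring
  · have h2 := cbrt_mul_nn (by linarith : (0:ℝ) ≤ -x) (by linarith : (0:ℝ) ≤ -y)
    rw [cbrt_neg, cbrt_neg] at h2
    have h1 : x * y = -x * -y := by ring
    rw [h1, h2]; ring

lemma cbrt_ne_zero {x : ℝ} (hx : x ≠ 0) : cbrt x ≠ 0 := by
  unfold cbrt
  rcases lt_or_gt_of_ne hx with h|h
  · rw [if_neg (by linarith)]
    have : (0:ℝ) < (-x) ^ ((1:ℝ)/3) := Real.rpow_pos_of_pos (by linarith) _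
    linarith
  · rw [if_pos h.le]
    have : (0:ℝ) < x ^ ((1:ℝ)/3) := Real.rpow_pos_of_pos h _
    linarith

lemma cbrt_inv (x : ℝ) : cbrt x⁻¹ = (cbrt x)⁻¹ := by
  rcases eq_or_ne x 0 with h|h
  · simp [h, cbrt_zero]
  · have h1 : cbrt x * cbrt x⁻¹ = 1 := by
      rw [← cbrt_mul, mul_inv_cancel₀ h]
      simp [cbrt]
    exact eq_inv_of_mul_eq_one_right h1

lemma cbrt_div (x y : ℝ) : cbrt (x / y) = cbrt x / cbrt y := by
  rw [div_eq_mul_inv, cbrt_mul, cbrt_inv, div_eq_mul_inv]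

/-- Reduction of the RAPM model by the subgroup H₂ (r ≠ 0): with
u = S w(z) + (τ/r) S ln S, z = S e^{-rt}, the PDE holds iff
(τ + r z(z w'' + 2 w'))(1 - μ r^{-1/3}(τ + r z(z w'' + 2 w'))^{1/3}) + 2rτ/σ² = 0. -/
theorem rapm_H2_reduction (σ μ r φ : ℝ) (hσ : 0 < σ) (hμ : 0 < μ) (hr : r ≠ 0)
    (hφ : φ ∈ Set.Ico 0 Real.pi) (hφ' : φ ≠ Real.pi / 2)
    (w : ℝ → ℝ) (hw : ContDiffOn ℝ 2 w (Set.Ioi 0)) :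
    ∀ S t : ℝ, 0 < S →
      (RAPM σ μ r
          (fun S t => S * w (S * Real.exp (-r * t))
            + Real.tan φ / r * S * Real.log S) S t ↔
        (Real.tan φ + r * (S * Real.exp (-r * t)) *
            ((S * Real.exp (-r * t)) * deriv (deriv w) (S * Real.exp (-r * t))
              + 2 * deriv w (S * Real.exp (-r * t)))) *
          (1 - μ * (cbrt r)⁻¹ *
            cbrt (Real.tan φ + r * (S * Real.exp (-r * t)) *
              ((S * Real.exp (-r * t)) * deriv (deriv w) (S * Real.exp (-r * t))
                + 2 * deriv w (S * Real.exp (-r * t)))))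
          + 2 * r * Real.tan φ / σ^2 = 0) := by
  intro S t hS
  have hE0 : 0 < Real.exp (-r * t) := Real.exp_pos _
  set τ := Real.tan φ with hτdef
  set E := Real.exp (-r * t) with hEdef
  set z := S * E with hzdef
  have hz0 : 0 < z := mul_pos hS hE0
  have hw1 : ∀ x ∈ Set.Ioi (0:ℝ), HasDerivAt w (deriv w x) x := fun x hx =>
    ((hw.differentiableOn (by norm_num)).differentiableAt (isOpen_Ioi.mem_nhds hx)).hasDerivAt
  have hwd : ContDiffOn ℝ 1 (deriv w) (Set.Ioi 0) :=
    hw.deriv_of_isOpen isOpen_Ioi (by norm_num)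
  have hw2 : ∀ x ∈ Set.Ioi (0:ℝ), HasDerivAt (deriv w) (deriv (deriv w) x) x := fun x hx =>
    ((hwd.differentiableOn (by norm_num)).differentiableAt (isOpen_Ioi.mem_nhds hx)).hasDerivAt
  set u : ℝ → ℝ → ℝ := fun S t => S * w (S * Real.exp (-r * t))
      + τ / r * S * Real.log S with hudef
  -- first S-derivative, valid at every s > 0
  have hpS : ∀ s : ℝ, 0 < s → pS u s t
      = w (s * E) + s * deriv w (s * E) * E + τ / r * Real.log s + τ / r := by
    intro s hs
    have hin : HasDerivAt (fun s' : ℝ => s' * E) E s := by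
      simpa using (hasDerivAt_id s).mul_const E
    have h1 : HasDerivAt (fun s' : ℝ => s' * w (s' * E))
        (1 * w (s * E) + s * (deriv w (s * E) * E)) s :=
      (hasDerivAt_id s).mul (((hw1 (s * E) (mul_pos hs hE0)).comp s hin))
    have h2 : HasDerivAt (fun s' : ℝ => τ / r * (s' * Real.log s'))
        (τ / r * (Real.log s + 1)) s :=
      (Real.hasDerivAt_mul_log hs.ne').const_mul (τ / r)
    have h3 : HasDerivAt (fun s' : ℝ => u s' t)
        (1 * w (s * E) + s * (deriv w (s * E) * E) + τ / r * (Real.log s + 1)) s := by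
      have := h1.add h2
      convert this using 1
      · rfl
      · rfl
      funext s'
      simp only [hudef, ← hEdef, Pi.add_apply]
      ring
    rw [pS, h3.deriv]
    ring
  -- second S-derivative at S
  have hpSS : pSS u S t = 2 * deriv w z * E + z * deriv (deriv w) z * E + τ / r / S := by
    have heq : (fun s => pS u s t) =ᶠ[nhds S]
        (fun s => w (s * E) + s * deriv w (s * E) * E + τ / r * Real.log s + τ / r) := by
      filter_upwards [isOpen_Ioi.mem_nhds hS] with s hs using hpS s hs
    rw [pSS, heq.deriv_eq]
    have hin : HasDerivAt (fun s' : ℝ => s' * E) E S := by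
      simpa using (hasDerivAt_id S).mul_const E
    have ha : HasDerivAt (fun s : ℝ => w (s * E)) (deriv w z * E) S :=
      (hw1 z hz0).comp S hin
    have hb : HasDerivAt (fun s : ℝ => s * (deriv w (s * E) * E))
        (1 * (deriv w z * E) + S * (deriv (deriv w) z * E * E)) S :=
      (hasDerivAt_id S).mul ((HasDerivAt.comp (h₂ := deriv w) S (hw2 z hz0) hin).mul_const E)
    have hc : HasDerivAt (fun s : ℝ => τ / r * Real.log s) (τ / r * S⁻¹) S :=
      (Real.hasDerivAt_log hS.ne').const_mul (τ / r)
    have h : HasDerivAt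
        (fun s => w (s * E) + s * deriv w (s * E) * E + τ / r * Real.log s + τ / r)
        (deriv w z * E + (1 * (deriv w z * E) + S * (deriv (deriv w) z * E * E))
          + τ / r * S⁻¹) S := by
      have := ((ha.add (hb.congr_deriv rfl)).add hc).add_const (τ / r)
      convert this using 1
      · rfl
      · rfl
      funext s
      simp only [Pi.add_apply]
      ring
    rw [h.deriv]
    have hSE : S * E = z := rfl
    field_simp
    ring
  -- t-derivative at (S, t)
  have hpT : pT u S t = -(r * S * z * deriv w z) := by
    have hin : HasDerivAt (fun t' : ℝ => S * Real.exp (-r * t')) (S * (E * -r)) t := by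
      have h0 : HasDerivAt (fun t' : ℝ => -r * t') (-r) t := by
        simpa using (hasDerivAt_id t).const_mul (-r)
      exact (h0.exp).const_mul S
    have h1 : HasDerivAt (fun t' : ℝ => u S t')
        (S * (deriv w z * (S * (E * -r)))) t := by
      have := (((hw1 z hz0).comp t hin).const_mul S).add_const (τ / r * S * Real.log S)
      convert this using 1
      · rfl
      · rfl
      rfl
    rw [pT, h1.deriv]
    ring
  have hA : S * pSS u S t = (τ + r * z * (z * deriv (deriv w) z + 2 * deriv w z)) / r := by
    rw [hpSS, hzdef]
    field_simp
    ring
  have hu : u S t = S * w z + τ / r * S * Real.log S := rfl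
  have hSne : (S:ℝ) ≠ 0 := hS.ne'
  have hcr : cbrt r ≠ 0 := cbrt_ne_zero hr
  set A := τ + r * z * (z * deriv (deriv w) z + 2 * deriv w z) with hAdef
  have hcbrt : cbrt (S * pSS u S t) = cbrt A * (cbrt r)⁻¹ := by
    rw [hA, cbrt_div, div_eq_mul_inv]
  have hrw : pT u S t + σ^2/2 * S^2 * pSS u S t * (1 - μ * cbrt (S * pSS u S t))
      - r * u S t + r * S * pS u S t
      = σ^2 * S / (2 * r) * (A * (1 - μ * (cbrt r)⁻¹ * cbrt A) + 2 * r * τ / σ^2) := by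
    have h2 : σ^2/2 * S^2 * pSS u S t = σ^2/2 * S * (A / r) := by
      rw [← hA]; ring
    rw [hpT, hcbrt, h2, hpS S hS, hu, hAdef, hzdef]
    field_simp
    ring
  have hne : σ^2 * S / (2 * r) ≠ 0 := by
    apply div_ne_zero (by positivity) (by simpa using hr)
  constructor
  · intro h
    have h' := h
    rw [RAPM] at h'
    rw [hrw] at h'
    have := (mul_eq_zero.mp h').resolve_left hne
    convert this using 2 <;> rw [hAdef, hzdef]
  · intro h
    rw [RAPM, hrw]
    have : A * (1 - μ * (cbrt r)⁻¹ * cbrt A) + 2 * r * τ / σ^2 = 0 := by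
      convert h using 2 <;> rw [hAdef, hzdef]
    rw [this, mul_zero]
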